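/- arXiv:2009.02477 — 2 statements merged into one kernel-verified Lean document; each statement's English description precedes it below -/
import Mathlib

section
/- An element a of a complex unital Banach algebra A has a g-Drazin inverse if and only if there exists an invertible u ∈ A commuting with a such that a − a²u is quasinilpotent. -/
open Filter Finset

/-- An element of a complex (Banach) algebra is quasinilpotent if its spectral radius is zero. -/
noncomputable def Quasinilpotent {A : Type*} [Ring A] [Algebra ℂ A] (q : A) : Prop :=
  spectralRadius ℂ q = 0

/-- `a` has a generalized Drazin inverse: some `b` with `ab = ba`, `b = bab`,
and `a - a²b` quasinilpotent. -/
noncomputable def HasGDrazin {A : Type*} [Ring A] [Algebra ℂ A] (a : A) : Prop :=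
  ∃ b : A, a * b = b * a ∧ b = b * a * b ∧ Quasinilpotent (a - a ^ 2 * b)

/-!
If `b` is a g-Drazin inverse of `a`, then `ab` is idempotent, `u = b + 1 - ab` is invertible with
inverse `a²b + 1 - ab`, and `a - a²u = (1 - a)(a - a²b)` is quasinilpotent.

Conversely, for `e = au` the element `t = e - e² = u(a - a²u)` is quasinilpotent. By Gelfand's
formula the Catalan series `c = ∑ Cₙ tⁿ` converges, and it solves `c = 1 + tc²`; so `q = tc` is a
second root of `x - x² = t`, and `1 - 2q` is invertible since `(1 - 2q)² = 1 - 4t`. Then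
`p = (e - q)(1 - 2q)⁻¹` is an idempotent in `e + tA`, and `b = u p (1 - (1 - e)p)⁻¹` is a g-Drazin
inverse of `a`. Both arguments take place in the closed commutative subalgebra `{a, u}''`, where
quasinilpotency is the same as in `A` because it only depends on the norms of powers.
-/

open scoped Topology

section Quasinilpotent

variable {A : Type*} [NormedRing A] [NormedAlgebra ℂ A]

theorem Quasinilpotent.isUnit_one_sub {q : A} (hq : Quasinilpotent q) : IsUnit (1 - q) := by
  have h : spectralRadius ℂ q < ‖(1 : ℂ)‖₊ := by
    rw [show spectralRadius ℂ q = 0 from hq]; simp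
  simpa using spectrum.mem_resolventSet_iff.1 (spectrum.mem_resolventSet_of_spectralRadius_lt h)

variable [CompleteSpace A]

theorem quasinilpotent_iff_tendsto_norm_pow_rpow {q : A} :
    Quasinilpotent q ↔ Tendsto (fun n : ℕ => ‖q ^ n‖ ^ (1 / n : ℝ)) atTop (𝓝 0) := by
  have gelfand := spectrum.pow_norm_pow_one_div_tendsto_nhds_spectralRadius q
  refine ⟨fun hq => ?_, fun h =>
    tendsto_nhds_unique gelfand (by simpa using ENNReal.tendsto_ofReal h)⟩
  rw [show spectralRadius ℂ q = 0 from hq] at gelfand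
  refine ((ENNReal.tendsto_toReal ENNReal.zero_ne_top).comp gelfand).congr fun n => ?_
  exact ENNReal.toReal_ofReal (by positivity)

theorem Quasinilpotent.eventually_norm_pow_le {q : A} (hq : Quasinilpotent q) {ε : ℝ}
    (hε : 0 < ε) : ∀ᶠ n in atTop, ‖q ^ n‖ ≤ ε ^ n := by
  filter_upwards [(quasinilpotent_iff_tendsto_norm_pow_rpow.1 hq).eventually (ge_mem_nhds hε),
    eventually_gt_atTop 0] with n hn hn0
  rw [one_div, Real.rpow_inv_le_iff_of_pos (norm_nonneg _) hε.le (by positivity)] at hn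
  exact_mod_cast hn

theorem Quasinilpotent.summable_mul_norm_pow {q : A} (hq : Quasinilpotent q) (r : ℝ) :
    Summable fun n : ℕ => r ^ n * ‖q ^ n‖ := by
  have hr : 0 < 2 * (|r| + 1) := by positivity
  refine Summable.of_norm_bounded_eventually_nat summable_geometric_two ?_
  filter_upwards [hq.eventually_norm_pow_le (inv_pos.2 hr)] with n hn
  calc ‖r ^ n * ‖q ^ n‖‖ = |r| ^ n * ‖q ^ n‖ := by simp
    _ ≤ |r| ^ n * (2 * (|r| + 1))⁻¹ ^ n := by gcongr
    _ = (|r| / (2 * (|r| + 1))) ^ n := by rw [div_eq_mul_inv, mul_pow]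
    _ ≤ (1 / 2) ^ n := by
      refine pow_le_pow_left₀ (by positivity) ?_ n
      rw [div_le_div_iff₀ hr two_pos]
      linarith [abs_nonneg r]

theorem Commute.quasinilpotent_mul_left {x q : A} (hxq : Commute x q) (hq : Quasinilpotent q) :
    Quasinilpotent (x * q) := by
  rw [quasinilpotent_iff_tendsto_norm_pow_rpow] at hq ⊢
  have hbound : ∀ᶠ n : ℕ in atTop,
      ‖(x * q) ^ n‖ ^ (1 / n : ℝ) ≤ ‖x‖ * ‖q ^ n‖ ^ (1 / n : ℝ) := by
    filter_upwards [eventually_gt_atTop 0] with n hn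
    calc ‖(x * q) ^ n‖ ^ (1 / n : ℝ) ≤ (‖x‖ ^ n * ‖q ^ n‖) ^ (1 / n : ℝ) := by
          rw [hxq.mul_pow]
          gcongr
          exact (norm_mul_le _ _).trans (by gcongr; exact norm_pow_le' x hn)
      _ = ‖x‖ * ‖q ^ n‖ ^ (1 / n : ℝ) := by
          rw [Real.mul_rpow (by positivity) (norm_nonneg _), one_div,
            Real.pow_rpow_inv_natCast (norm_nonneg _) hn.ne']
  exact squeeze_zero' (Eventually.of_forall fun n => by positivity) hbound
    (by simpa using hq.const_mul ‖x‖)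

theorem Subalgebra.quasinilpotent_coe_iff {S : Subalgebra ℂ A} [CompleteSpace S] {x : S} :
    Quasinilpotent (x : A) ↔ Quasinilpotent x := by
  simp only [quasinilpotent_iff_tendsto_norm_pow_rpow, ← Subalgebra.coe_pow]
  rfl

end Quasinilpotent

theorem catalan_le_four_pow (n : ℕ) : catalan n ≤ 4 ^ n :=
  (catalan_eq_centralBinom_div n).trans_le <|
    (Nat.div_le_self _ _).trans (Nat.centralBinom_le_four_pow n)

section Catalan

variable {A : Type*} [NormedRing A] [NormedAlgebra ℂ A] [CompleteSpace A]

theorem Quasinilpotent.exists_eq_one_add_mul_sq {t : A} (ht : Quasinilpotent t) :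
    ∃ c : A, c = 1 + t * c ^ 2 := by
  set f : ℕ → A := fun n => catalan n • t ^ n with hf_def
  have hf : Summable fun n => ‖f n‖ := by
    refine .of_nonneg_of_le (fun _ => norm_nonneg _) (fun n => ?_) (ht.summable_mul_norm_pow 4)
    calc ‖f n‖ ≤ catalan n * ‖t ^ n‖ := norm_nsmul_le ..
      _ ≤ 4 ^ n * ‖t ^ n‖ := by gcongr; exact_mod_cast catalan_le_four_pow n
  have hsq : (∑' n, f n) ^ 2 = ∑' n, catalan (n + 1) • t ^ n := by
    rw [sq, tsum_mul_tsum_eq_tsum_sum_antidiagonal_of_summable_norm hf hf]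
    refine tsum_congr fun n => ?_
    rw [catalan_succ', Finset.sum_smul]
    refine Finset.sum_congr rfl fun ij hij => ?_
    rw [hf_def, smul_mul_smul_comm, ← pow_add, mem_antidiagonal.1 hij]
  have hsum : Summable fun n => catalan (n + 1) • t ^ n := by
    refine .of_norm_bounded ((ht.summable_mul_norm_pow 4).mul_left 4) fun n => ?_
    calc ‖catalan (n + 1) • t ^ n‖ ≤ catalan (n + 1) * ‖t ^ n‖ := norm_nsmul_le ..
      _ ≤ 4 ^ (n + 1) * ‖t ^ n‖ := by gcongr; exact_mod_cast catalan_le_four_pow _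
      _ = 4 * (4 ^ n * ‖t ^ n‖) := by ring
  refine ⟨∑' n, f n, ?_⟩
  rw [hsq, ← hsum.tsum_mul_left, hf.of_norm.tsum_eq_zero_add]
  congr 1
  · simp [hf_def]
  · exact tsum_congr fun n => by simp only [hf_def, mul_smul_comm, pow_succ']

end Catalan

theorem isIdempotentElem_sub_mul_of_sub_sq_eq {R : Type*} [CommRing R] {e q z : R}
    (h : e - e ^ 2 = q - q ^ 2) (hz : z * (1 - 2 * q) = 1) : IsIdempotentElem ((e - q) * z) := by
  unfold IsIdempotentElem
  linear_combination (e - q) * z * hz - z ^ 2 * h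

section Commutative

variable {B : Type*} [NormedCommRing B] [NormedAlgebra ℂ B] [CompleteSpace B]

theorem Quasinilpotent.exists_isIdempotentElem_eq_add_mul {e : B}
    (he : Quasinilpotent (e - e ^ 2)) :
    ∃ p w : B, IsIdempotentElem p ∧ p = e + (e - e ^ 2) * w := by
  obtain ⟨c, hc⟩ := he.exists_eq_one_add_mul_sq
  have hq : e - e ^ 2 = (e - e ^ 2) * c - ((e - e ^ 2) * c) ^ 2 := by
    linear_combination (-(e - e ^ 2)) * hc
  have hunit : IsUnit (1 - 2 * ((e - e ^ 2) * c)) := by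
    rw [← isUnit_pow_iff two_ne_zero]
    convert ((Commute.all 4 _).quasinilpotent_mul_left he).isUnit_one_sub using 1
    linear_combination 4 * hq
  obtain ⟨z, hz⟩ := hunit.exists_left_inv
  exact ⟨_, -(c * (1 - 2 * e) * z), isIdempotentElem_sub_mul_of_sub_sq_eq hq hz,
    by linear_combination e * hz⟩

theorem HasGDrazin.exists_isUnit_quasinilpotent {a : B} (h : HasGDrazin a) :
    ∃ u : B, IsUnit u ∧ Quasinilpotent (a - a ^ 2 * u) := by
  obtain ⟨b, -, hb, hq⟩ := h
  refine ⟨b + 1 - a * b, IsUnit.of_mul_eq_one (a ^ 2 * b + 1 - a * b) ?_, ?_⟩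
  · linear_combination (a - 1) ^ 2 * hb
  · have hfactor : a - a ^ 2 * (b + 1 - a * b) = (1 - a) * (a - a ^ 2 * b) := by ring
    rw [hfactor]
    exact (Commute.all _ _).quasinilpotent_mul_left hq

theorem hasGDrazin_of_quasinilpotent_sub_sq_mul {a u : B} (h : Quasinilpotent (a - a ^ 2 * u)) :
    HasGDrazin a := by
  have ht : Quasinilpotent (a * u - (a * u) ^ 2) := by
    rw [show a * u - (a * u) ^ 2 = u * (a - a ^ 2 * u) by ring]
    exact (Commute.all u _).quasinilpotent_mul_left h
  obtain ⟨p, w, hp, hpw⟩ := ht.exists_isIdempotentElem_eq_add_mul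
  -- `y` inverts `1 - (1 - au) p`
  obtain ⟨y, hy⟩ := ((Commute.all (1 + (1 - a * u) * w) _).quasinilpotent_mul_left
    ht).isUnit_one_sub.exists_left_inv
  have hab : a * (u * p * y) = p := by
    linear_combination p * hy + (1 - a * u) * y * hp.eq - p * y * (1 - a * u) * hpw
  refine ⟨u * p * y, mul_comm _ _, ?_, ?_⟩
  · linear_combination (-(u * y)) * hp.eq - (u * p * y) * hab
  · have hfactor : a - a ^ 2 * (u * p * y) = (1 - a * u * w) * (a - a ^ 2 * u) := by
      linear_combination (-a) * hab - a * hpw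
    rw [hfactor]
    exact (Commute.all _ _).quasinilpotent_mul_left h

end Commutative

section Bicommutant

variable {A : Type*} [NormedRing A] [NormedAlgebra ℂ A]

def bicommutant (a b : A) : Subalgebra ℂ A :=
  Subalgebra.centralizer ℂ (Set.centralizer {a, b})

theorem left_mem_bicommutant (a b : A) : a ∈ bicommutant a b :=
  Set.subset_centralizer_centralizer (Set.mem_insert a {b})

theorem right_mem_bicommutant (a b : A) : b ∈ bicommutant a b :=
  Set.subset_centralizer_centralizer (Set.mem_insert_of_mem a rfl)

instance [CompleteSpace A] (a b : A) : CompleteSpace (bicommutant a b) :=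
  (Set.isClosed_centralizer _).completeSpace_coe

abbrev Commute.bicommutantNormedCommRing {a b : A} (h : Commute a b) :
    NormedCommRing (bicommutant a b) :=
  { (inferInstance : NormedRing (bicommutant a b)) with
    mul_comm := fun x y => Subtype.ext <| Set.centralizer_centralizer_comm_of_comm
      (by rintro _ (rfl | rfl) _ (rfl | rfl) <;> simp [h.eq]) _ x.2 _ y.2 }

variable [CompleteSpace A]

theorem HasGDrazin.exists_isUnit_commute_quasinilpotent {a : A} (h : HasGDrazin a) :
    ∃ u : A, IsUnit u ∧ a * u = u * a ∧ Quasinilpotent (a - a ^ 2 * u) := by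
  obtain ⟨b, hab, hbab, hq⟩ := h
  let := Commute.bicommutantNormedCommRing hab
  let a' : bicommutant a b := ⟨a, left_mem_bicommutant a b⟩
  let b' : bicommutant a b := ⟨b, right_mem_bicommutant a b⟩
  have hbab' : b' = b' * a' * b' := Subtype.ext hbab
  have hq' : Quasinilpotent (a' - a' ^ 2 * b') := Subalgebra.quasinilpotent_coe_iff.1 hq
  obtain ⟨u, hu, hqu⟩ := HasGDrazin.exists_isUnit_quasinilpotent ⟨b', mul_comm _ _, hbab', hq'⟩
  have hqu' : Quasinilpotent ((a' - a' ^ 2 * u : bicommutant a b) : A) :=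
    Subalgebra.quasinilpotent_coe_iff.2 hqu
  exact ⟨u, hu.map (bicommutant a b).val, congrArg Subtype.val (mul_comm a' u), hqu'⟩

theorem Commute.hasGDrazin_of_quasinilpotent_sub_sq_mul {a u : A} (hau : Commute a u)
    (h : Quasinilpotent (a - a ^ 2 * u)) : HasGDrazin a := by
  let := hau.bicommutantNormedCommRing
  let a' : bicommutant a u := ⟨a, left_mem_bicommutant a u⟩
  let u' : bicommutant a u := ⟨u, right_mem_bicommutant a u⟩
  have h' : Quasinilpotent (a' - a' ^ 2 * u') := Subalgebra.quasinilpotent_coe_iff.1 h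
  obtain ⟨b, -, hbab, hq⟩ := _root_.hasGDrazin_of_quasinilpotent_sub_sq_mul h'
  have hq' : Quasinilpotent ((a' - a' ^ 2 * b : bicommutant a u) : A) :=
    Subalgebra.quasinilpotent_coe_iff.2 hq
  exact ⟨b, congrArg Subtype.val (mul_comm a' b), congrArg Subtype.val hbab, hq'⟩

end Bicommutant

theorem stmt2 {A : Type*} [NormedRing A] [NormedAlgebra ℂ A] [CompleteSpace A] (a : A) :
    HasGDrazin a ↔ ∃ u : A, IsUnit u ∧ a * u = u * a ∧ Quasinilpotent (a - a ^ 2 * u) :=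
  ⟨HasGDrazin.exists_isUnit_commute_quasinilpotent,
    fun ⟨_, _, hau, h⟩ => Commute.hasGDrazin_of_quasinilpotent_sub_sq_mul hau h⟩
end

section
/- If p commutes with a, a + p is invertible and ap is quasinilpotent, then b := (a+p)^{-1}(1−p) commutes with a and a − a²b = ap[1 + (a+p)^{-1}(1−p)] is quasinilpotent. -/
/-! Writing `x = (a + p)⁻¹ (1 - p)`, commutativity of `a` and `x` gives the first claim, and
`a - a²x - ap(1 + x) = a((1 - p) - (a + p)x) = 0` the second. Then `ap` commutes with `1 + x`,
and by Gelfand's formula `r(qy) ≤ r(q)‖y‖` for commuting `q, y`, so `ap(1 + x)` is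
quasinilpotent. -/

open Filter Finset

open scoped ENNReal NNReal

section SpectralRadius

variable {A : Type*} [NormedRing A] [NormedAlgebra ℂ A] [CompleteSpace A]

theorem Commute.spectralRadius_mul_le {q y : A} (h : Commute q y) :
    spectralRadius ℂ (q * y) ≤ spectralRadius ℂ q * ‖y‖₊ := by
  have hqy := spectrum.pow_nnnorm_pow_one_div_tendsto_nhds_spectralRadius (q * y)
  have hq := ENNReal.Tendsto.mul_const
    (spectrum.pow_nnnorm_pow_one_div_tendsto_nhds_spectralRadius q)
    (Or.inr (ENNReal.coe_ne_top (r := ‖y‖₊)))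
  refine le_of_tendsto_of_tendsto hqy hq ?_
  filter_upwards [eventually_ge_atTop 1] with n hn
  have hn0 : (n : ℝ) ≠ 0 := by positivity
  have hbound : ‖(q * y) ^ n‖₊ ≤ ‖q ^ n‖₊ * ‖y‖₊ ^ n := by
    rw [h.mul_pow]
    exact (nnnorm_mul_le _ _).trans (mul_le_mul_right (nnnorm_pow_le' y hn) _)
  calc (‖(q * y) ^ n‖₊ : ℝ≥0∞) ^ (1 / n : ℝ)
      ≤ ((‖q ^ n‖₊ * ‖y‖₊ ^ n : ℝ≥0) : ℝ≥0∞) ^ (1 / n : ℝ) :=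
        ENNReal.rpow_le_rpow (by exact_mod_cast hbound) (by positivity)
    _ = (‖q ^ n‖₊ : ℝ≥0∞) ^ (1 / n : ℝ) * ‖y‖₊ := by
        rw [ENNReal.coe_mul, ENNReal.mul_rpow_of_nonneg _ _ (by positivity), ENNReal.coe_pow,
          ← ENNReal.rpow_natCast, ← ENNReal.rpow_mul, mul_one_div, div_self hn0,
          ENNReal.rpow_one]

theorem Quasinilpotent.mul_of_commute {q y : A} (hq : Quasinilpotent q) (h : Commute q y) :
    Quasinilpotent (q * y) := by
  unfold Quasinilpotent at hq ⊢
  simpa [hq] using h.spectralRadius_mul_le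

end SpectralRadius

theorem sub_sq_mul_eq_mul_one_add {R : Type*} [Ring R] {a p x : R}
    (h : (a + p) * x = 1 - p) : a - a ^ 2 * x = a * p * (1 + x) := by
  have key : a - a ^ 2 * x - a * p * (1 + x) = a * ((1 - p) - (a + p) * x) := by noncomm_ring
  rwa [h, sub_self, mul_zero, sub_eq_zero] at key

theorem stmt5 {A : Type*} [NormedRing A] [NormedAlgebra ℂ A] [CompleteSpace A]
    (a p : A) (hcomm : a * p = p * a) (u : Aˣ) (hu : (u : A) = a + p)
    (hq : Quasinilpotent (a * p)) :
    a * ((↑u⁻¹ : A) * (1 - p)) = ((↑u⁻¹ : A) * (1 - p)) * a ∧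
      a - a ^ 2 * ((↑u⁻¹ : A) * (1 - p)) = a * p * (1 + (↑u⁻¹ : A) * (1 - p)) ∧
      Quasinilpotent (a - a ^ 2 * ((↑u⁻¹ : A) * (1 - p))) := by
  have hap : Commute a p := hcomm
  have hau : Commute a (u : A) := hu ▸ (Commute.refl a).add_right hap
  have hpu : Commute p (u : A) := hu ▸ hap.symm.add_right (Commute.refl p)
  have hax : Commute a (↑u⁻¹ * (1 - p)) :=
    hau.units_inv_right.mul_right ((Commute.one_right a).sub_right hap)
  have hpx : Commute p (↑u⁻¹ * (1 - p)) :=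
    hpu.units_inv_right.mul_right ((Commute.one_right p).sub_right (Commute.refl p))
  have hform : a - a ^ 2 * (↑u⁻¹ * (1 - p)) = a * p * (1 + ↑u⁻¹ * (1 - p)) :=
    sub_sq_mul_eq_mul_one_add (by rw [← hu, Units.mul_inv_cancel_left])
  refine ⟨hax.eq, hform, ?_⟩
  rw [hform]
  exact hq.mul_of_commute ((Commute.one_right _).add_right (hax.mul_left hpx))
end
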